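/- arXiv:1708.01686 — 8 statements merged into one kernel-verified Lean document; each statement's English description precedes it below -/
import Mathlib

section
/- Let σ > 0 and ξ ≥ −1, and let f be the exGPD(σ, ξ) density, i.e. f(y) = (e^y/σ)(1 + ξ e^y/σ)^(−1/ξ − 1) for ξ ≠ 0 (on the support −∞ < y < ∞ if ξ > 0, and −∞ < y ≤ log(−σ/ξ) if ξ < 0) and f(y) = (1/σ) e^(y − e^y/σ) for ξ = 0. Then f is bounded and has a unique mode at y = log σ: for every y in the support with y ≠ log σ one has f(y) < f(log σ). -/
open Real


/-- The density of exGPD(σ, ξ). -/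
noncomputable def exGPDpdf (σ ξ y : ℝ) : ℝ :=
  if ξ = 0 then (1 / σ) * Real.exp (y - Real.exp y / σ)
  else (Real.exp y / σ) * (1 + ξ * Real.exp y / σ) ^ (-1 / ξ - 1)

/-- The support of exGPD(σ, ξ): all of ℝ for ξ ≥ 0, and (−∞, log(−σ/ξ)] for ξ < 0. -/
noncomputable def exGPDsupp (σ ξ : ℝ) : Set ℝ :=
  if ξ < 0 then Set.Iic (Real.log (-σ / ξ)) else Set.univ


/-- Bernoulli's inequality for negative real exponents, strict version. -/
lemma exGPD_bern_neg {a p : ℝ} (ha : 0 < a) (hane : a ≠ 1) (hp : p < 0) :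
    1 + p * (a - 1) < a ^ p := by
  have h1 : Real.log a < a - 1 := Real.log_lt_sub_one_of_pos ha hane
  have h2 : p * (a - 1) < p * Real.log a := by nlinarith
  calc 1 + p * (a - 1) ≤ Real.exp (p * (a - 1)) := by
        linarith [Real.add_one_le_exp (p * (a - 1))]
    _ < Real.exp (p * Real.log a) := Real.exp_lt_exp.2 h2
    _ = a ^ p := by rw [Real.rpow_def_of_pos ha, mul_comm]

/-- Key inequality: for `-1 < ξ`, `ξ ≠ 0`, `0 < t`, `0 ≤ 1 + ξ t`, `t ≠ 1`,
we have `t (1+ξt)^(-1/ξ-1) < (1+ξ)^(-1/ξ-1)`. -/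
lemma exGPD_key {ξ t : ℝ} (hξ : -1 < ξ) (hξ0 : ξ ≠ 0) (ht : 0 < t)
    (hdom : 0 ≤ 1 + ξ * t) (hne : t ≠ 1) :
    t * (1 + ξ * t) ^ (-1 / ξ - 1 : ℝ) < (1 + ξ) ^ (-1 / ξ - 1 : ℝ) := by
  have h1ξ : 0 < 1 + ξ := by linarith
  have hexp : (-1 / ξ - 1 : ℝ) = -((1 + ξ) / ξ) := by field_simp; ring
  set p : ℝ := (1 + ξ) / ξ with hp
  rw [hexp]
  rcases eq_or_lt_of_le hdom with h0 | h0
  · -- boundary: 1 + ξ t = 0, only possible when ξ < 0, and then -p > 0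
    have hξneg : ξ < 0 := by
      rcases lt_or_gt_of_ne hξ0 with h | h
      · exact h
      · nlinarith
    have hppos : 0 < -p := by
      have : p < 0 := div_neg_of_pos_of_neg h1ξ hξneg
      linarith
    rw [← h0, Real.zero_rpow hppos.ne', mul_zero]
    exact Real.rpow_pos_of_pos h1ξ _
  · have ha : 0 < (1 + ξ * t) / (1 + ξ) := div_pos h0 h1ξ
    set a : ℝ := (1 + ξ * t) / (1 + ξ) with hadef
    have hta : t = 1 + p * (a - 1) := by
      rw [hp, hadef]; field_simp; ring
    have hane : a ≠ 1 := by
      intro h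
      apply hne
      rw [hadef, div_eq_one_iff_eq h1ξ.ne'] at h
      have h2 : ξ * t = ξ * 1 := by linarith
      exact mul_left_cancel₀ hξ0 h2
    have hbern : 1 + p * (a - 1) < a ^ p := by
      rcases lt_or_gt_of_ne hξ0 with hneg | hpos
      · exact exGPD_bern_neg ha hane (div_neg_of_pos_of_neg h1ξ hneg)
      · have hp1 : 1 < p := by
          rw [hp, lt_div_iff₀ hpos]; linarith
        have h := one_add_mul_self_lt_rpow_one_add (s := a - 1)
          (by linarith : (-1 : ℝ) ≤ a - 1)
          (by intro h; apply hane; linarith) hp1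
        have h' : 1 + (a - 1) = a := by ring
        rwa [h'] at h
    rw [← hta] at hbern
    have hpowpos : 0 < (1 + ξ * t) ^ (-p) := Real.rpow_pos_of_pos h0 _
    calc t * (1 + ξ * t) ^ (-p) < a ^ p * (1 + ξ * t) ^ (-p) :=
          mul_lt_mul_of_pos_right hbern hpowpos
      _ = (1 + ξ) ^ (-p) := by
          rw [hadef, Real.div_rpow h0.le h1ξ.le, Real.rpow_neg h0.le, Real.rpow_neg h1ξ.le]
          have h1 : (1 + ξ * t) ^ p ≠ 0 := (Real.rpow_pos_of_pos h0 p).ne'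
          field_simp

/-- For `σ > 0` and `ξ ≥ −1` the exGPD(σ, ξ) density is bounded and has a unique
mode at `log σ`: for every `y` in the support with `y ≠ log σ`,
`f(y) < f(log σ)`. -/
theorem exGPD_bounded_unique_mode (σ ξ : ℝ) (hσ : 0 < σ) (hξ : -1 ≤ ξ) :
    (∃ M : ℝ, ∀ y ∈ exGPDsupp σ ξ, exGPDpdf σ ξ y ≤ M) ∧
      Real.log σ ∈ exGPDsupp σ ξ ∧
      ∀ y ∈ exGPDsupp σ ξ, y ≠ Real.log σ → exGPDpdf σ ξ y < exGPDpdf σ ξ (Real.log σ) := by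
  have hmem : Real.log σ ∈ exGPDsupp σ ξ := by
    unfold exGPDsupp
    split_ifs with h
    · have hle : σ ≤ -σ / ξ := by
        rw [le_div_iff_of_neg h]
        nlinarith
      exact Real.log_le_log hσ hle
    · trivial
  have hmain : ∀ y ∈ exGPDsupp σ ξ, y ≠ Real.log σ →
      exGPDpdf σ ξ y < exGPDpdf σ ξ (Real.log σ) := by
    intro y hy hyne
    have ht : 0 < Real.exp y / σ := div_pos (Real.exp_pos y) hσ
    have htne : Real.exp y / σ ≠ 1 := by
      intro h
      apply hyne
      have : Real.exp y = σ := by field_simp at h; linarith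
      rw [← this, Real.log_exp]
    by_cases hξ0 : ξ = 0
    · subst hξ0
      simp only [exGPDpdf, if_pos rfl]
      rw [Real.exp_log hσ, div_self hσ.ne']
      refine mul_lt_mul_of_pos_left ?_ (by positivity)
      rw [Real.exp_lt_exp]
      have hlog : Real.log (Real.exp y / σ) < Real.exp y / σ - 1 :=
        Real.log_lt_sub_one_of_pos ht htne
      rw [Real.log_div (Real.exp_ne_zero y) hσ.ne', Real.log_exp] at hlog
      linarith
    · simp only [exGPDpdf, if_neg hξ0]
      have hσσ : σ / σ = 1 := div_self hσ.ne'
      rw [Real.exp_log hσ, mul_div_assoc ξ σ, mul_div_assoc ξ (Real.exp y), hσσ, one_mul, mul_one]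
      have hdom : 0 ≤ 1 + ξ * (Real.exp y / σ) := by
        rcases lt_or_gt_of_ne hξ0 with hneg | hpos
        · have hy' : y ≤ Real.log (-σ / ξ) := by
            simpa [exGPDsupp, if_pos hneg] using hy
          have hpos' : 0 < -σ / ξ := div_pos_of_neg_of_neg (by linarith) hneg
          have : Real.exp y ≤ -σ / ξ := by
            calc Real.exp y ≤ Real.exp (Real.log (-σ / ξ)) := Real.exp_le_exp.2 hy'
              _ = -σ / ξ := Real.exp_log hpos'
          have h4 := mul_le_mul_of_nonneg_left this (by linarith : (0:ℝ) ≤ -ξ)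
          have h5 : -ξ * (-σ / ξ) = σ := by field_simp
          rw [h5] at h4
          have h2 : -1 ≤ ξ * (Real.exp y / σ) := by
            rw [← mul_div_assoc, le_div_iff₀ hσ]
            nlinarith
          linarith
        · positivity
      rcases eq_or_lt_of_le hξ with hm1 | hm1
      · -- ξ = -1
        have hξ1 : ξ = -1 := hm1.symm
        subst hξ1
        have he : (-1 / (-1 : ℝ) - 1) = 0 := by norm_num
        rw [he, Real.rpow_zero, Real.rpow_zero, mul_one]
        have hy' : y ≤ Real.log (-σ / (-1)) := by
          simpa [exGPDsupp] using hy
        rw [show -σ / (-1 : ℝ) = σ by ring] at hy'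
        have hlt : y < Real.log σ := lt_of_le_of_ne hy' hyne
        have : Real.exp y < σ := by
          calc Real.exp y < Real.exp (Real.log σ) := Real.exp_lt_exp.2 hlt
            _ = σ := Real.exp_log hσ
        rw [div_lt_one hσ]
        exact this
      · exact exGPD_key hm1 hξ0 ht hdom htne
  refine ⟨⟨exGPDpdf σ ξ (Real.log σ), ?_⟩, hmem, hmain⟩
  intro y hy
  by_cases h : y = Real.log σ
  · rw [h]
  · exact (hmain y hy h).le
end

section
/- Let σ > 0 and ξ ≠ 0, and let f(y) = (e^y/σ)(1 + ξ e^y/σ)^(−1/ξ − 1) and F(y) = 1 − (1 + ξ e^y/σ)^(−1/ξ) be the exGPD(σ, ξ) density and distribution function. Then for every y in the interior of the support, the hazard function satisfies h(y) = f(y)/(1 − F(y)) = 1/(σ e^(−y) + ξ), and h is strictly increasing in y on the support; hence the exGPD has increasing failure rate regardless of the sign of ξ. -/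
/-- For `σ > 0`, `ξ ≠ 0`, the hazard function `h(y) = f(y)/(1 − F(y))` of the
exGPD(σ, ξ) distribution equals `1/(σ e^(−y) + ξ)` on the interior of the support,
and is strictly increasing there (increasing failure rate). -/
theorem exGPD_hazard (σ ξ : ℝ) (hσ : 0 < σ) (hξ : ξ ≠ 0) :
    (∀ y ∈ (if ξ < 0 then Set.Iio (Real.log (-σ / ξ)) else Set.univ),
        ((Real.exp y / σ) * (1 + ξ * Real.exp y / σ) ^ (-1 / ξ - 1)) /
            (1 - (1 - (1 + ξ * Real.exp y / σ) ^ (-1 / ξ))) =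
          1 / (σ * Real.exp (-y) + ξ)) ∧
      StrictMonoOn
        (fun y : ℝ => ((Real.exp y / σ) * (1 + ξ * Real.exp y / σ) ^ (-1 / ξ - 1)) /
          (1 - (1 - (1 + ξ * Real.exp y / σ) ^ (-1 / ξ))))
        (if ξ < 0 then Set.Iio (Real.log (-σ / ξ)) else Set.univ) := by
  have hpos : ∀ y ∈ (if ξ < 0 then Set.Iio (Real.log (-σ / ξ)) else Set.univ),
      0 < 1 + ξ * Real.exp y / σ := by
    intro y hy
    rcases lt_or_gt_of_ne hξ with hneg | hposξ
    · rw [if_pos hneg] at hy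
      have h1 : 0 < -σ / ξ := div_pos_of_neg_of_neg (by linarith) hneg
      have h2 : Real.exp y < -σ / ξ := by
        have := Real.exp_lt_exp.2 hy
        rwa [Real.exp_log h1] at this
      have h4 : ξ * (-σ / ξ) = -σ := by field_simp
      have h3 : -σ < ξ * Real.exp y := h4 ▸ mul_lt_mul_of_neg_left h2 hneg
      have h5 : -σ / σ < ξ * Real.exp y / σ := div_lt_div_of_pos_right h3 hσ
      rw [neg_div, div_self hσ.ne'] at h5
      linarith
    · have : 0 < ξ * Real.exp y / σ := by positivity
      linarith
  have hden : ∀ y ∈ (if ξ < 0 then Set.Iio (Real.log (-σ / ξ)) else Set.univ),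
      0 < σ * Real.exp (-y) + ξ := by
    intro y hy
    have ht := hpos y hy
    have he : Real.exp y ≠ 0 := (Real.exp_pos y).ne'
    have heq : σ * Real.exp (-y) + ξ =
        Real.exp (-y) * (σ * (1 + ξ * Real.exp y / σ)) := by
      rw [Real.exp_neg]
      field_simp
    rw [heq]
    exact mul_pos (Real.exp_pos _) (mul_pos hσ ht)
  have key : ∀ y ∈ (if ξ < 0 then Set.Iio (Real.log (-σ / ξ)) else Set.univ),
      ((Real.exp y / σ) * (1 + ξ * Real.exp y / σ) ^ (-1 / ξ - 1)) /
          (1 - (1 - (1 + ξ * Real.exp y / σ) ^ (-1 / ξ))) =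
        1 / (σ * Real.exp (-y) + ξ) := by
    intro y hy
    have ht := hpos y hy
    have hd := hden y hy
    have hne : (1 + ξ * Real.exp y / σ) ^ (-1 / ξ) ≠ 0 :=
      (Real.rpow_pos_of_pos ht _).ne'
    have he : Real.exp y ≠ 0 := (Real.exp_pos y).ne'
    rw [show (1 : ℝ) - (1 - (1 + ξ * Real.exp y / σ) ^ (-1 / ξ)) =
        (1 + ξ * Real.exp y / σ) ^ (-1 / ξ) by ring]
    rw [Real.rpow_sub ht, Real.rpow_one]
    have h0 : ∀ r : ℝ, r ≠ 0 →
        (Real.exp y / σ * (r / (1 + ξ * Real.exp y / σ))) / r =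
          Real.exp y / (σ * (1 + ξ * Real.exp y / σ)) := by
      intro r hr
      have h1 : r / (1 + ξ * Real.exp y / σ) / r = 1 / (1 + ξ * Real.exp y / σ) := by
        rw [div_div, mul_comm, ← div_div, div_self hr]
      rw [mul_div_assoc, h1, mul_one_div, div_div]
    rw [h0 _ hne, div_eq_div_iff (mul_pos hσ ht).ne' hd.ne', Real.exp_neg]
    field_simp
  refine ⟨key, ?_⟩
  intro x hx y hy hxy
  simp only
  rw [key x hx, key y hy]
  have hdy := hden y hy
  have hlt : σ * Real.exp (-y) + ξ < σ * Real.exp (-x) + ξ := by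
    have : Real.exp (-y) < Real.exp (-x) := Real.exp_lt_exp.2 (by linarith)
    nlinarith
  exact one_div_lt_one_div_of_lt hdy hlt
end

section
/- Let σ > 0 and ξ < 0. For every real s with s > −1, the moment generating function of the exGPD(σ, ξ) distribution satisfies M(s) = ∫_{−∞}^{log(−σ/ξ)} e^{sy} (e^y/σ)(1 + ξ e^y/σ)^(−1/ξ − 1) dy = −(1/ξ) (−σ/ξ)^s · B(s + 1, −1/ξ), where B(x, y) = Γ(x)Γ(y)/Γ(x + y) is the Beta function. -/
/-!
Substituting `t = exp y` turns the integral into `σ⁻¹ ∫₀^c t^s (1 - t/c)^(-1/ξ - 1) dt`, where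
`c = -σ/ξ` is the right endpoint of the support of the GPD. Rescaling `t = c u` gives
`c^(s+1) B(s + 1, -1/ξ) / σ`, and `c / σ = -1/ξ`.
-/

open Real Set MeasureTheory ProbabilityTheory

theorem integral_comp_exp_Iio {E : Type*} [NormedAddCommGroup E] [NormedSpace ℝ E]
    (g : ℝ → E) (a : ℝ) :
    ∫ x in Iio a, exp x • g (exp x) = ∫ y in Ioo 0 (exp a), g y := by
  symm; rw [← image_exp_Iio]
  simpa [abs_of_pos (exp_pos _)] using integral_image_eq_integral_abs_deriv_smul
      (measurableSet_Iio (a := a)) (fun x _ ↦ (hasDerivAt_exp x).hasDerivWithinAt)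
      (fun x _ y _ hxy ↦ exp_injective hxy) g

theorem integral_rpow_mul_one_sub_rpow {a b : ℝ} (ha : 0 < a) (hb : 0 < b) :
    ∫ x in (0 : ℝ)..1, x ^ (a - 1) * (1 - x) ^ (b - 1) = beta a b := by
  have hcast : Complex.betaIntegral a b =
      ↑(∫ x in (0 : ℝ)..1, x ^ (a - 1) * (1 - x) ^ (b - 1)) := by
    rw [Complex.betaIntegral, ← intervalIntegral.integral_ofReal]
    refine intervalIntegral.integral_congr fun x hx ↦ ?_
    rw [uIcc_of_le zero_le_one] at hx
    push_cast
    rw [Complex.ofReal_cpow hx.1, Complex.ofReal_cpow (sub_nonneg.2 hx.2)]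
    push_cast
    ring
  rw [beta_eq_betaIntegralReal a b ha hb, hcast, Complex.ofReal_re]

theorem integral_rpow_mul_one_sub_div_rpow {a b c : ℝ} (ha : 0 < a) (hb : 0 < b) (hc : 0 < c) :
    ∫ t in (0 : ℝ)..c, t ^ (a - 1) * (1 - t / c) ^ (b - 1) = c ^ a * beta a b := by
  have hscale := intervalIntegral.integral_comp_mul_left
    (fun t ↦ t ^ (a - 1) * (1 - t / c) ^ (b - 1)) hc.ne' (a := 0) (b := 1)
  simp only [mul_zero, mul_one, smul_eq_mul] at hscale
  have hpt : ∀ u ∈ uIcc (0 : ℝ) 1, (c * u) ^ (a - 1) * (1 - c * u / c) ^ (b - 1)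
      = c ^ (a - 1) * (u ^ (a - 1) * (1 - u) ^ (b - 1)) := by
    intro u hu
    rw [uIcc_of_le zero_le_one] at hu
    rw [mul_rpow hc.le hu.1, mul_div_cancel_left₀ u hc.ne']
    ring
  rw [intervalIntegral.integral_congr hpt, intervalIntegral.integral_const_mul,
    integral_rpow_mul_one_sub_rpow ha hb, rpow_sub_one hc.ne',
    eq_inv_mul_iff_mul_eq₀ hc.ne'] at hscale
  rw [← hscale]
  field_simp

/-- For `σ > 0`, `ξ < 0`, `s > −1`, the mgf of exGPD(σ, ξ) is
`M(s) = −(1/ξ)(−σ/ξ)^s B(s+1, −1/ξ)` with `B(x,y) = Γ(x)Γ(y)/Γ(x+y)`. -/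
theorem exGPD_mgf_neg_shape (σ ξ : ℝ) (hσ : 0 < σ) (hξ : ξ < 0) (s : ℝ) (hs : -1 < s) :
    ∫ y in Set.Iio (Real.log (-σ / ξ)),
        Real.exp (s * y) * ((Real.exp y / σ) * (1 + ξ * Real.exp y / σ) ^ (-1 / ξ - 1)) =
      -(1 / ξ) * (-σ / ξ) ^ s *
        (Real.Gamma (s + 1) * Real.Gamma (-1 / ξ) / Real.Gamma (s + 1 + -1 / ξ)) := by
  set c := -σ / ξ with hc_def
  have hc : 0 < c := div_pos_of_neg_of_neg (neg_neg_of_pos hσ) hξ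
  have hshape : 0 < -1 / ξ := div_pos_of_neg_of_neg (by norm_num) hξ
  have hintegrand : ∀ y, exp (s * y) * ((exp y / σ) * (1 + ξ * exp y / σ) ^ (-1 / ξ - 1))
      = exp y • (σ⁻¹ * ((exp y) ^ (s + 1 - 1) * (1 - exp y / c) ^ (-1 / ξ - 1))) := by
    intro y
    have hbase : 1 + ξ * exp y / σ = 1 - exp y / c := by
      rw [hc_def]; field_simp; ring
    rw [hbase, add_sub_cancel_right, ← exp_mul, mul_comm y s, smul_eq_mul]
    field_simp
  have hcσ : c / σ = -(1 / ξ) := by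
    rw [hc_def, div_right_comm, neg_div_self hσ.ne', neg_div]
  simp_rw [hintegrand]
  rw [integral_comp_exp_Iio (fun t ↦ σ⁻¹ * (t ^ (s + 1 - 1) * (1 - t / c) ^ (-1 / ξ - 1))),
    exp_log hc, ← integral_Ioc_eq_integral_Ioo, ← intervalIntegral.integral_of_le hc.le,
    intervalIntegral.integral_const_mul,
    integral_rpow_mul_one_sub_div_rpow (by linarith : 0 < s + 1) hshape hc,
    rpow_add hc, rpow_one]
  rw [← hcσ, beta]
  field_simp
end

section
/- Let σ > 0 and ξ > 0. For every real s with −1 < s < 1/ξ, the moment generating function of the exGPD(σ, ξ) distribution satisfies M(s) = ∫_{−∞}^{∞} e^{sy} (e^y/σ)(1 + ξ e^y/σ)^(−1/ξ − 1) dy = (1/ξ) (σ/ξ)^s · B(s + 1, 1/ξ − s), where B(x, y) = Γ(x)Γ(y)/Γ(x + y) is the Beta function. -/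
/-!
Substituting `t = exp y` and rescaling `t = (σ / ξ) u` turns the moment generating function
into the beta-prime integral `∫₀^∞ u^(a-1) (1 + u)^(-(a+b)) du` with `a = s + 1`,
`b = 1/ξ - s`, and `x = u / (1 + u)` maps that onto Euler's beta integral over `(0, 1)`.
-/

open MeasureTheory ProbabilityTheory Real Set

theorem integral_Ioo_rpow_mul_one_sub_rpow {a b : ℝ} (ha : 0 < a) (hb : 0 < b) :
    ∫ x in Ioo (0 : ℝ) 1, x ^ (a - 1) * (1 - x) ^ (b - 1) = beta a b := by
  rw [beta_eq_betaIntegralReal a b ha hb, Complex.betaIntegral,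
    intervalIntegral.integral_of_le zero_le_one, ← integral_Ioc_eq_integral_Ioo,
    ← RCLike.re_to_complex, ← integral_re]
  · refine setIntegral_congr_fun measurableSet_Ioc fun x ⟨hx0, hx1⟩ => ?_
    norm_cast
    rw [← Complex.ofReal_cpow hx0.le, ← Complex.ofReal_cpow (by linarith), RCLike.re_to_complex,
      ← Complex.ofReal_mul, Complex.ofReal_re]
  · have := Complex.betaIntegral_convergent (u := a) (v := b) (by simpa) (by simpa)
    rwa [intervalIntegrable_iff_integrableOn_Ioc_of_le zero_le_one] at this

theorem image_div_one_add_Ioi : (fun u : ℝ => u / (1 + u)) '' Ioi 0 = Ioo 0 1 := by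
  ext x
  constructor
  · rintro ⟨u, hu : 0 < u, rfl⟩
    exact ⟨by positivity, (div_lt_one (by linarith)).2 (by linarith)⟩
  · rintro ⟨hx0, hx1⟩
    refine ⟨x / (1 - x), div_pos hx0 (by linarith), ?_⟩
    have : 1 - x ≠ 0 := by linarith
    field_simp
    ring

theorem injOn_div_one_add_Ioi : InjOn (fun u : ℝ => u / (1 + u)) (Ioi 0) := by
  intro u (hu : 0 < u) v (hv : 0 < v) huv
  rw [div_eq_div_iff (by linarith) (by linarith)] at huv
  linarith

theorem integral_Ioi_rpow_mul_one_add_rpow {a b : ℝ} (ha : 0 < a) (hb : 0 < b) :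
    ∫ u in Ioi (0 : ℝ), u ^ (a - 1) * (1 + u) ^ (-(a + b)) = beta a b := by
  have hderiv : ∀ u ∈ Ioi (0 : ℝ),
      HasDerivWithinAt (fun u : ℝ => u / (1 + u)) (((1 + u) ^ 2)⁻¹) (Ioi 0) u := by
    intro u (hu : 0 < u)
    have h := (hasDerivAt_id' u).div ((hasDerivAt_const u (1 : ℝ)).add (hasDerivAt_id' u))
      (by linarith : 1 + u ≠ 0)
    rw [show ((1 + u) ^ 2)⁻¹ = (1 * (1 + u) - u * (0 + 1)) / (1 + u) ^ 2 by ring]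
    exact h.hasDerivWithinAt
  rw [← integral_Ioo_rpow_mul_one_sub_rpow ha hb, ← image_div_one_add_Ioi,
    integral_image_eq_integral_abs_deriv_smul measurableSet_Ioi hderiv injOn_div_one_add_Ioi]
  refine setIntegral_congr_fun measurableSet_Ioi fun u (hu : 0 < u) => ?_
  have hu1 : 0 < 1 + u := by linarith
  have hsub : 1 - u / (1 + u) = (1 + u)⁻¹ := by field_simp; ring
  have hpow : (1 + u) ^ (-(a + b)) =
      ((1 + u) ^ (2 : ℝ) * (1 + u) ^ (a - 1) * (1 + u) ^ (b - 1))⁻¹ := by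
    rw [← rpow_add hu1, ← rpow_add hu1, ← rpow_neg hu1.le]
    ring_nf
  rw [hsub, hpow, smul_eq_mul, abs_of_pos (by positivity), div_rpow hu.le hu1.le, inv_rpow hu1.le,
    rpow_two]
  field_simp

theorem integral_Ioi_rpow_mul_one_add_mul_rpow {a b c : ℝ} (ha : 0 < a) (hb : 0 < b)
    (hc : 0 < c) :
    ∫ t in Ioi (0 : ℝ), t ^ (a - 1) * (1 + c * t) ^ (-(a + b)) = c ^ (-a) * beta a b := by
  have hscale := integral_comp_mul_left_Ioi (fun u => u ^ (a - 1) * (1 + u) ^ (-(a + b))) 0 hc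
  rw [mul_zero, integral_Ioi_rpow_mul_one_add_rpow ha hb, smul_eq_mul] at hscale
  calc ∫ t in Ioi (0 : ℝ), t ^ (a - 1) * (1 + c * t) ^ (-(a + b))
      = ∫ t in Ioi (0 : ℝ), c ^ (1 - a) * ((c * t) ^ (a - 1) * (1 + c * t) ^ (-(a + b))) := by
        refine setIntegral_congr_fun measurableSet_Ioi fun t (ht : 0 < t) => ?_
        rw [mul_rpow hc.le ht.le, ← mul_assoc, ← mul_assoc, ← rpow_add hc]
        simp
    _ = c ^ (1 - a) * (c⁻¹ * beta a b) := by rw [integral_const_mul, hscale]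
    _ = c ^ (-a) * beta a b := by
        rw [← rpow_neg_one, ← mul_assoc, ← rpow_add hc]
        ring_nf

theorem integral_exp_smul_comp_exp {E : Type*} [NormedAddCommGroup E] [NormedSpace ℝ E]
    (g : ℝ → E) : ∫ y, exp y • g (exp y) = ∫ t in Ioi 0, g t := by
  rw [← range_exp, ← image_univ, integral_image_eq_integral_abs_deriv_smul MeasurableSet.univ
    (fun y _ => (hasDerivAt_exp y).hasDerivWithinAt) exp_injective.injOn, setIntegral_univ]
  simp only [abs_of_pos (exp_pos _)]

theorem integral_exp_mul_mul_one_add_mul_exp_rpow {a b c : ℝ} (ha : 0 < a) (hb : 0 < b)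
    (hc : 0 < c) : ∫ y, exp (a * y) * (1 + c * exp y) ^ (-(a + b)) = c ^ (-a) * beta a b := by
  rw [← integral_Ioi_rpow_mul_one_add_mul_rpow ha hb hc, ← integral_exp_smul_comp_exp]
  congr 1 with y
  rw [smul_eq_mul, ← mul_assoc, ← exp_mul, ← exp_add]
  ring_nf

/-- For `σ > 0`, `ξ > 0`, `−1 < s < 1/ξ`, the mgf of exGPD(σ, ξ) is
`M(s) = (1/ξ)(σ/ξ)^s B(s+1, 1/ξ − s)` with `B(x,y) = Γ(x)Γ(y)/Γ(x+y)`. -/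
theorem exGPD_mgf_pos_shape (σ ξ : ℝ) (hσ : 0 < σ) (hξ : 0 < ξ) (s : ℝ)
    (hs₁ : -1 < s) (hs₂ : s < 1 / ξ) :
    ∫ y : ℝ,
        Real.exp (s * y) * ((Real.exp y / σ) * (1 + ξ * Real.exp y / σ) ^ (-1 / ξ - 1)) =
      (1 / ξ) * (σ / ξ) ^ s *
        (Real.Gamma (s + 1) * Real.Gamma (1 / ξ - s) / Real.Gamma (s + 1 + (1 / ξ - s))) := by
  have hexp : -((s + 1) + (1 / ξ - s)) = -1 / ξ - 1 := by ring
  have hconst : 1 / σ * (ξ / σ) ^ (-(s + 1)) = 1 / ξ * (σ / ξ) ^ s := by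
    rw [rpow_neg (by positivity), ← inv_rpow (by positivity), inv_div,
      rpow_add_one (by positivity)]
    field_simp
  calc ∫ y : ℝ, exp (s * y) * ((exp y / σ) * (1 + ξ * exp y / σ) ^ (-1 / ξ - 1))
      = ∫ y : ℝ, 1 / σ *
          (exp ((s + 1) * y) * (1 + ξ / σ * exp y) ^ (-((s + 1) + (1 / ξ - s)))) := by
        congr 1 with y
        rw [hexp, add_mul, one_mul, exp_add, mul_div_right_comm ξ]
        ring
    _ = 1 / σ * ((ξ / σ) ^ (-(s + 1)) * beta (s + 1) (1 / ξ - s)) := by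
        rw [integral_const_mul, integral_exp_mul_mul_one_add_mul_exp_rpow (by linarith)
          (by linarith) (by positivity)]
    _ = _ := by rw [← mul_assoc, hconst, beta]
end

section
/- Let σ > 0. The mean of the exGPD(σ, 0) distribution equals log σ minus the Euler–Mascheroni constant: ∫_{−∞}^{∞} y · (1/σ) e^(y − e^y/σ) dy = log σ − γ, where γ = 0.5772… is the Euler–Mascheroni constant. -/
open MeasureTheory Set Real

/-- Integrability of `log t * exp (-t)` on `(0, ∞)`. -/
lemma integrableOn_log_mul_exp_neg :
    IntegrableOn (fun t : ℝ => Real.log t * Real.exp (-t)) (Ioi 0) := by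
  have h1 : IntegrableOn (fun x : ℝ => Real.exp (-x) * x ^ ((3:ℝ)/2 - 1)) (Ioi 0) :=
    Real.GammaIntegral_convergent (by norm_num)
  have h2 : IntegrableOn (fun x : ℝ => Real.exp (-x) * x ^ ((1:ℝ)/2 - 1)) (Ioi 0) :=
    Real.GammaIntegral_convergent (by norm_num)
  refine Integrable.mono' ((h1.add h2).const_mul 2) ?_ ?_
  · exact (measurable_log.mul (measurable_exp.comp measurable_neg)).aestronglyMeasurable
  · filter_upwards [ae_restrict_mem measurableSet_Ioi] with t ht
    rw [mem_Ioi] at ht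
    have hlog : |Real.log t| ≤ 2 * (t ^ ((1:ℝ)/2) + t ^ (-(1:ℝ)/2)) := by
      rcases le_or_gt 1 t with h | h
      · have h0 : Real.log t = 2 * Real.log (t ^ ((1:ℝ)/2)) := by
          rw [Real.log_rpow ht]; ring
        have h1' : Real.log (t ^ ((1:ℝ)/2)) ≤ t ^ ((1:ℝ)/2) :=
          (Real.log_le_sub_one_of_pos (Real.rpow_pos_of_pos ht _)).trans (by linarith)
        rw [abs_of_nonneg (Real.log_nonneg h), h0]
        nlinarith [Real.rpow_pos_of_pos ht (-(1:ℝ)/2), Real.rpow_pos_of_pos ht ((1:ℝ)/2)]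
      · have h0 : -Real.log t = 2 * Real.log (t ^ (-(1:ℝ)/2)) := by
          rw [Real.log_rpow ht]; ring
        have h1' : Real.log (t ^ (-(1:ℝ)/2)) ≤ t ^ (-(1:ℝ)/2) :=
          (Real.log_le_sub_one_of_pos (Real.rpow_pos_of_pos ht _)).trans (by linarith)
        rw [abs_of_nonpos (Real.log_nonpos ht.le h.le), h0]
        nlinarith [Real.rpow_pos_of_pos ht (-(1:ℝ)/2), Real.rpow_pos_of_pos ht ((1:ℝ)/2)]
    have hexp : (0:ℝ) < Real.exp (-t) := Real.exp_pos _
    have : |Real.log t * Real.exp (-t)| = |Real.log t| * Real.exp (-t) := by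
      rw [abs_mul, abs_of_pos hexp]
    rw [Real.norm_eq_abs, this]
    simp only [Pi.add_apply]
    have h32 : t ^ ((3:ℝ)/2 - 1) = t ^ ((1:ℝ)/2) := by norm_num
    have h12 : t ^ ((1:ℝ)/2 - 1) = t ^ (-(1:ℝ)/2) := by norm_num
    rw [h32, h12]
    nlinarith [mul_le_mul_of_nonneg_right hlog hexp.le]

/-- The integral `∫ t in (0,∞), log t * exp (-t)` equals `-γ`. -/
lemma integral_log_mul_exp_neg :
    ∫ t in Ioi (0:ℝ), Real.log t * Real.exp (-t) = -Real.eulerMascheroniConstant := by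
  set I : ℝ := ∫ t in Ioi (0:ℝ), Real.log t * Real.exp (-t) with hI
  have h1 : HasDerivAt Complex.GammaIntegral
      (∫ t : ℝ in Ioi 0, (t : ℂ) ^ ((1:ℂ) - 1) * (Real.log t * Real.exp (-t))) 1 :=
    Complex.hasDerivAt_GammaIntegral (by simp)
  have heq : (∫ t : ℝ in Ioi 0, (t : ℂ) ^ ((1:ℂ) - 1) * (Real.log t * Real.exp (-t)))
      = (I : ℂ) := by
    have : (∫ t : ℝ in Ioi 0, (t : ℂ) ^ ((1:ℂ) - 1) * (Real.log t * Real.exp (-t)))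
        = ∫ t : ℝ in Ioi (0:ℝ), ((Real.log t * Real.exp (-t) : ℝ) : ℂ) := by
      refine setIntegral_congr_fun measurableSet_Ioi fun t ht => ?_
      simp [Complex.ofReal_mul]
    rw [this, hI]
    exact integral_ofReal
  rw [heq] at h1
  have h2 : HasDerivAt Complex.Gamma (I : ℂ) 1 := by
    refine h1.congr_of_eventuallyEq ?_
    have hmem : {s : ℂ | 0 < s.re} ∈ nhds (1 : ℂ) := by
      refine IsOpen.mem_nhds (isOpen_lt continuous_const Complex.continuous_re) (by simp)
    filter_upwards [hmem] with s hs
    exact Complex.Gamma_eq_integral hs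
  have h3 : HasDerivAt Real.Gamma (I : ℂ).re 1 := by
    have := h2.real_of_complex
    refine this.congr_of_eventuallyEq ?_
    filter_upwards with x
    simp [Complex.Gamma_ofReal]
  have h4 := Real.hasDerivAt_Gamma_one
  have := h3.unique h4
  simpa using this

/-- For `σ > 0`, the mean of exGPD(σ, 0) equals `log σ − γ`, with `γ` the
Euler–Mascheroni constant. -/
theorem exGPD_mean_zero_shape (σ : ℝ) (hσ : 0 < σ) :
    ∫ y : ℝ, y * ((1 / σ) * Real.exp (y - Real.exp y / σ)) =
      Real.log σ - Real.eulerMascheroniConstant := by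
  -- Step 1: substitute x = exp y
  set g : ℝ → ℝ := fun x => Real.log x * ((1 / σ) * Real.exp (-(x / σ))) with hg
  have hsub : (∫ y : ℝ, y * ((1 / σ) * Real.exp (y - Real.exp y / σ)))
      = ∫ x in Ioi (0:ℝ), g x := by
    have himg : Real.exp '' univ = Ioi 0 := by
      rw [image_univ, Real.range_exp]
    have := integral_image_eq_integral_abs_deriv_smul (f := Real.exp) (f' := Real.exp)
      MeasurableSet.univ (fun x _ => (Real.hasDerivAt_exp x).hasDerivWithinAt)
      (Real.exp_injective.injOn) g
    rw [himg, Measure.restrict_univ] at this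
    rw [this]
    refine integral_congr_ae (Filter.Eventually.of_forall fun y => ?_)
    rw [hg]
    simp only [smul_eq_mul, Real.log_exp, abs_of_pos (Real.exp_pos y)]
    rw [show y - Real.exp y / σ = -(Real.exp y / σ) + y by ring, Real.exp_add]
    ring
  -- Step 2: substitute x = σ * t
  have hsub2 : (∫ x in Ioi (0:ℝ), g x)
      = ∫ t in Ioi (0:ℝ), Real.log (σ * t) * Real.exp (-t) := by
    have := integral_comp_mul_left_Ioi g 0 hσ
    rw [mul_zero] at this
    have h2 : (∫ x in Ioi (0:ℝ), g x) = σ • ∫ t in Ioi (0:ℝ), g (σ * t) := by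
      rw [this, smul_smul, mul_inv_cancel₀ hσ.ne', one_smul]
    rw [h2]
    rw [smul_eq_mul, ← integral_const_mul]
    refine setIntegral_congr_fun measurableSet_Ioi fun t ht => ?_
    rw [hg]
    simp only
    have h : σ * t / σ = t := by field_simp
    rw [h]
    field_simp
  -- Step 3: expand the logarithm and compute
  have hsub3 : (∫ t in Ioi (0:ℝ), Real.log (σ * t) * Real.exp (-t))
      = ∫ t in Ioi (0:ℝ), (Real.log σ * Real.exp (-t) + Real.log t * Real.exp (-t)) := by
    refine setIntegral_congr_fun measurableSet_Ioi fun t ht => ?_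
    rw [Real.log_mul hσ.ne' (ne_of_gt (mem_Ioi.mp ht))]
    ring
  rw [hsub, hsub2, hsub3]
  have hbase : IntegrableOn (fun t : ℝ => Real.exp (-t)) (Ioi 0) := by
    simpa using exp_neg_integrableOn_Ioi 0 one_pos
  have hInt1 : IntegrableOn (fun t : ℝ => Real.log σ * Real.exp (-t)) (Ioi 0) :=
    hbase.const_mul _
  have hInt2 := integrableOn_log_mul_exp_neg
  rw [integral_add hInt1 hInt2, integral_const_mul, integral_exp_neg_Ioi_zero,
    integral_log_mul_exp_neg]
  ring
end

section
/- Let σ > 0 and ξ ∈ ℝ, and let f be the exGPD(σ, ξ) density (f(y) = (e^y/σ)(1 + ξ e^y/σ)^(−1/ξ − 1) on its support for ξ ≠ 0, and f(y) = (1/σ) e^(y − e^y/σ) on ℝ for ξ = 0). Then the exGPD has finite moments of all orders: for every natural number n, the function y ↦ |y|^n f(y) is integrable over the support. -/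
open Real MeasureTheory Set

/-!
Polynomial moments converge as soon as the density decays exponentially in both tails. For
`ξ ≥ 0` the density is at most `eʸ / σ`, and on the right it decays like `e^(-y)` (`ξ = 0`,
since `eʸ ≥ y² / 2` swamps the linear term) or like `e^(-y / ξ)` (`ξ > 0`, bounding
`1 + ξ eʸ / σ` below by `ξ eʸ / σ`). For `ξ < 0` the left tail is again a multiple of `eʸ`, while
near the endpoint `log (-σ / ξ)` the density may blow up; but there it is the nonnegative
derivative of `-(1 + ξ eʸ / σ) ^ (-1 / ξ)`, which is continuous up to the endpoint, so it is
integrable on a compact neighbourhood where `|y| ^ n` is bounded.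
-/

section ExponentialTails

variable {f : ℝ → ℝ} {b C : ℝ}

lemma integrableOn_abs_pow_mul_exp_neg_mul_Ici (hb : 0 < b) (n : ℕ) (c : ℝ) :
    IntegrableOn (fun y => |y| ^ n * exp (-(b * y))) (Ici c) := by
  have h_pos : IntegrableOn (fun y => |y| ^ n * exp (-(b * y))) (Ioi 0) := by
    refine (integrableOn_rpow_mul_exp_neg_mul_rpow (p := 1) (s := n)
      (neg_one_lt_zero.trans_le n.cast_nonneg) one_pos hb).congr_fun (fun y hy => ?_)
      measurableSet_Ioi
    simp only [rpow_one, rpow_natCast, abs_of_pos (mem_Ioi.1 hy), neg_mul]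
  have h_compact : IntegrableOn (fun y => |y| ^ n * exp (-(b * y))) (Icc c 0) :=
    (by fun_prop : Continuous fun y => |y| ^ n * exp (-(b * y))).integrableOn_Icc
  refine (h_compact.union h_pos).mono_set fun y hy => ?_
  rcases le_or_gt y 0 with h | h
  · exact Or.inl ⟨hy, h⟩
  · exact Or.inr h

lemma integrableOn_abs_pow_mul_exp_mul_Iic (hb : 0 < b) (n : ℕ) (a : ℝ) :
    IntegrableOn (fun y => |y| ^ n * exp (b * y)) (Iic a) := by
  rw [← (Measure.measurePreserving_neg (volume : Measure ℝ)).integrableOn_comp_preimage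
    (Homeomorph.neg ℝ).measurableEmbedding]
  simpa [Function.comp_def] using integrableOn_abs_pow_mul_exp_neg_mul_Ici hb n (-a)

lemma integrableOn_abs_pow_mul_of_abs_le_exp_neg_mul (hb : 0 < b) (n : ℕ) {c : ℝ}
    (hf : Measurable f) (h : ∀ y ∈ Ici c, |f y| ≤ C * exp (-(b * y))) :
    IntegrableOn (fun y => |y| ^ n * f y) (Ici c) := by
  refine ((integrableOn_abs_pow_mul_exp_neg_mul_Ici hb n c).const_mul C).mono'
    (by fun_prop) (ae_restrict_of_forall_mem measurableSet_Ici fun y hy => ?_)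
  rw [norm_mul, norm_pow, Real.norm_eq_abs, abs_abs, Real.norm_eq_abs, mul_left_comm]
  exact mul_le_mul_of_nonneg_left (h y hy) (by positivity)

lemma integrableOn_abs_pow_mul_of_abs_le_exp_mul (hb : 0 < b) (n : ℕ) {a : ℝ}
    (hf : Measurable f) (h : ∀ y ∈ Iic a, |f y| ≤ C * exp (b * y)) :
    IntegrableOn (fun y => |y| ^ n * f y) (Iic a) := by
  refine ((integrableOn_abs_pow_mul_exp_mul_Iic hb n a).const_mul C).mono'
    (by fun_prop) (ae_restrict_of_forall_mem measurableSet_Iic fun y hy => ?_)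
  rw [norm_mul, norm_pow, Real.norm_eq_abs, abs_abs, Real.norm_eq_abs, mul_left_comm]
  exact mul_le_mul_of_nonneg_left (h y hy) (by positivity)

end ExponentialTails

section Density

variable {σ ξ : ℝ}

lemma measurable_exGPDpdf (σ ξ : ℝ) : Measurable (exGPDpdf σ ξ) := by
  unfold exGPDpdf
  split_ifs <;> fun_prop

lemma exGPDpdf_nonneg (hσ : 0 < σ) {y : ℝ} (hy : 0 ≤ 1 + ξ * exp y / σ) :
    0 ≤ exGPDpdf σ ξ y := by
  unfold exGPDpdf
  split_ifs
  · positivity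
  · exact mul_nonneg (by positivity) (rpow_nonneg hy _)

lemma neg_one_div_sub_one_nonpos (hξ : 0 ≤ ξ) : -1 / ξ - 1 ≤ 0 := by
  rw [neg_div]
  linarith [div_nonneg zero_le_one hξ]

lemma exGPDpdf_le_exp (hσ : 0 < σ) (hξ : 0 ≤ ξ) (y : ℝ) :
    exGPDpdf σ ξ y ≤ σ⁻¹ * exp y := by
  unfold exGPDpdf
  split_ifs
  · rw [one_div]
    gcongr
    linarith [div_nonneg (exp_pos y).le hσ.le]
  · have h_base : 1 ≤ 1 + ξ * exp y / σ := le_add_of_nonneg_right (by positivity)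
    calc exp y / σ * (1 + ξ * exp y / σ) ^ (-1 / ξ - 1)
        ≤ exp y / σ * 1 := by
          gcongr
          exact rpow_le_one_of_one_le_of_nonpos h_base (neg_one_div_sub_one_nonpos hξ)
      _ = σ⁻¹ * exp y := by ring

lemma exGPDpdf_zero_le_exp_neg (hσ : 0 < σ) (y : ℝ) :
    exGPDpdf σ 0 y ≤ exp (2 * σ) / σ * exp (-y) := by
  have h_exp : 2 * σ * y - 2 * σ ^ 2 ≤ exp y := by
    rcases le_or_gt y 0 with hy | hy
    · nlinarith [exp_pos y]
    · nlinarith [quadratic_le_exp_of_nonneg hy.le, sq_nonneg (y - 2 * σ)]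
  have h_le : y - exp y / σ ≤ 2 * σ + -y := by
    have : 2 * y - 2 * σ ≤ exp y / σ := by rw [le_div_iff₀ hσ]; linarith
    linarith
  rw [exGPDpdf, if_pos rfl]
  calc 1 / σ * exp (y - exp y / σ) ≤ 1 / σ * exp (2 * σ + -y) := by gcongr
    _ = exp (2 * σ) / σ * exp (-y) := by rw [exp_add]; ring

lemma exGPDpdf_le_exp_neg_of_pos (hσ : 0 < σ) (hξ : 0 < ξ) (y : ℝ) :
    exGPDpdf σ ξ y ≤ (ξ / σ) ^ (-1 / ξ - 1) / σ * exp (-(ξ⁻¹ * y)) := by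
  have h_base : ξ / σ * exp y ≤ 1 + ξ * exp y / σ := by
    rw [div_mul_eq_mul_div]; linarith
  calc exGPDpdf σ ξ y
      ≤ exp y / σ * (ξ / σ * exp y) ^ (-1 / ξ - 1) := by
        rw [exGPDpdf, if_neg hξ.ne']
        refine mul_le_mul_of_nonneg_left ?_ (by positivity)
        exact rpow_le_rpow_of_nonpos (by positivity) h_base (neg_one_div_sub_one_nonpos hξ.le)
    _ = (ξ / σ) ^ (-1 / ξ - 1) / σ * (exp y * exp (y * (-1 / ξ - 1))) := by
        rw [mul_rpow (by positivity) (exp_pos y).le, ← exp_mul]; ring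
    _ = (ξ / σ) ^ (-1 / ξ - 1) / σ * exp (-(ξ⁻¹ * y)) := by
        rw [← exp_add]; congr 2; field_simp; ring

lemma exists_exGPDpdf_le_exp_neg (hσ : 0 < σ) (hξ : 0 ≤ ξ) :
    ∃ b > 0, ∃ C, ∀ y, exGPDpdf σ ξ y ≤ C * exp (-(b * y)) := by
  rcases hξ.eq_or_lt with rfl | hξ
  · exact ⟨1, one_pos, _, fun y => by simpa using exGPDpdf_zero_le_exp_neg hσ y⟩
  · exact ⟨ξ⁻¹, inv_pos.2 hξ, _, exGPDpdf_le_exp_neg_of_pos hσ hξ⟩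

lemma hasDerivAt_neg_exGPD_survival (hξ : ξ ≠ 0) {y : ℝ} (hy : 1 + ξ * exp y / σ ≠ 0) :
    HasDerivAt (fun y => -(1 + ξ * exp y / σ) ^ (-1 / ξ)) (exGPDpdf σ ξ y) y := by
  have h_base : HasDerivAt (fun y => 1 + ξ * exp y / σ) (ξ * exp y / σ) y := by
    simpa using (((hasDerivAt_exp y).const_mul ξ).div_const σ).const_add 1
  refine (h_base.rpow_const (p := -1 / ξ) (Or.inl hy)).neg.congr_deriv ?_
  rw [exGPDpdf, if_neg hξ]
  field_simp

lemma one_add_mul_exp_div_eq_one_sub_exp (hσ : 0 < σ) (hξ : ξ < 0) (y : ℝ) :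
    1 + ξ * exp y / σ = 1 - exp (y - log (-σ / ξ)) := by
  rw [exp_sub, exp_log (div_pos_of_neg_of_neg (neg_neg_of_pos hσ) hξ)]
  field_simp
  ring

lemma one_add_mul_exp_div_nonneg_of_neg (hσ : 0 < σ) (hξ : ξ < 0) {y : ℝ}
    (hy : y ≤ log (-σ / ξ)) : 0 ≤ 1 + ξ * exp y / σ := by
  rw [one_add_mul_exp_div_eq_one_sub_exp hσ hξ, sub_nonneg, exp_le_one_iff]
  linarith

lemma integrableOn_exGPDpdf_Ioc_of_neg (hσ : 0 < σ) (hξ : ξ < 0) (a : ℝ) :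
    IntegrableOn (exGPDpdf σ ξ) (Ioc a (log (-σ / ξ))) := by
  have h_cont : Continuous fun y => -(1 + ξ * exp y / σ) ^ (-1 / ξ) :=
    ((by fun_prop : Continuous fun y => 1 + ξ * exp y / σ).rpow_const
      fun _ => Or.inr (div_nonneg_of_nonpos (by norm_num) hξ.le)).neg
  refine intervalIntegral.integrableOn_deriv_of_nonneg h_cont.continuousOn
    (fun y hy => ?_) (fun y hy => ?_)
  · refine hasDerivAt_neg_exGPD_survival hξ.ne (ne_of_gt ?_)
    rw [one_add_mul_exp_div_eq_one_sub_exp hσ hξ, sub_pos, exp_lt_one_iff]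
    linarith [hy.2]
  · exact exGPDpdf_nonneg hσ (one_add_mul_exp_div_nonneg_of_neg hσ hξ hy.2.le)

lemma exGPDpdf_le_exp_of_neg (hσ : 0 < σ) (hξ : ξ < 0) {y : ℝ}
    (hy : y ≤ log (-σ / ξ) - log 2) :
    exGPDpdf σ ξ y ≤ max 1 (2⁻¹ ^ (-1 / ξ - 1)) / σ * exp y := by
  have h_small : exp (y - log (-σ / ξ)) ≤ 2⁻¹ := by
    calc exp (y - log (-σ / ξ)) ≤ exp (-log 2) := exp_le_exp.2 (by linarith)
      _ = 2⁻¹ := by rw [exp_neg, exp_log two_pos]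
  have h_base : 2⁻¹ ≤ 1 + ξ * exp y / σ ∧ 1 + ξ * exp y / σ ≤ 1 := by
    rw [one_add_mul_exp_div_eq_one_sub_exp hσ hξ]
    constructor <;> linarith [exp_pos (y - log (-σ / ξ))]
  have h_rpow : (1 + ξ * exp y / σ) ^ (-1 / ξ - 1) ≤ max 1 (2⁻¹ ^ (-1 / ξ - 1)) := by
    rcases le_total 0 (-1 / ξ - 1) with h | h
    · exact le_max_of_le_left (rpow_le_one (by linarith [h_base.1]) h_base.2 h)
    · exact le_max_of_le_right (rpow_le_rpow_of_nonpos (by norm_num) h_base.1 h)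
  rw [exGPDpdf, if_neg hξ.ne]
  calc exp y / σ * (1 + ξ * exp y / σ) ^ (-1 / ξ - 1)
      ≤ exp y / σ * max 1 (2⁻¹ ^ (-1 / ξ - 1)) := by gcongr
    _ = max 1 (2⁻¹ ^ (-1 / ξ - 1)) / σ * exp y := by ring

lemma integrableOn_abs_pow_mul_exGPDpdf_of_neg (hσ : 0 < σ) (hξ : ξ < 0) (n : ℕ) :
    IntegrableOn (fun y => |y| ^ n * exGPDpdf σ ξ y) (Iic (log (-σ / ξ))) := by
  have h_split : log (-σ / ξ) - log 2 ≤ log (-σ / ξ) := sub_le_self _ (log_nonneg one_le_two)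
  rw [← Iic_union_Ioc_eq_Iic h_split]
  refine .union ?_ ?_
  · refine integrableOn_abs_pow_mul_of_abs_le_exp_mul (C := max 1 (2⁻¹ ^ (-1 / ξ - 1)) / σ)
      one_pos n (measurable_exGPDpdf σ ξ) fun y hy => ?_
    rw [one_mul, abs_of_nonneg (exGPDpdf_nonneg hσ
      (one_add_mul_exp_div_nonneg_of_neg hσ hξ (le_trans hy h_split)))]
    exact exGPDpdf_le_exp_of_neg hσ hξ hy
  · exact IntegrableOn.continuousOn_mul_of_subset (by fun_prop)
      (integrableOn_exGPDpdf_Ioc_of_neg hσ hξ _) isCompact_Icc measurableSet_Ioc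
      Ioc_subset_Icc_self

lemma integrable_abs_pow_mul_exGPDpdf_of_nonneg (hσ : 0 < σ) (hξ : 0 ≤ ξ) (n : ℕ) :
    Integrable (fun y => |y| ^ n * exGPDpdf σ ξ y) := by
  have h_abs : ∀ y, |exGPDpdf σ ξ y| = exGPDpdf σ ξ y :=
    fun y => abs_of_nonneg (exGPDpdf_nonneg hσ (by positivity))
  obtain ⟨b, hb, C, hC⟩ := exists_exGPDpdf_le_exp_neg hσ hξ
  rw [← integrableOn_univ, ← Iic_union_Ici (a := 0)]
  refine .union ?_ ?_
  · refine integrableOn_abs_pow_mul_of_abs_le_exp_mul (C := σ⁻¹) one_pos n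
      (measurable_exGPDpdf σ ξ) fun y _ => ?_
    rw [h_abs, one_mul]
    exact exGPDpdf_le_exp hσ hξ y
  · exact integrableOn_abs_pow_mul_of_abs_le_exp_neg_mul hb n (measurable_exGPDpdf σ ξ)
      fun y _ => (h_abs y).trans_le (hC y)

end Density

/-- The exGPD(σ, ξ) distribution has finite moments of all orders: for every `n`,
`y ↦ |y|^n f(y)` is integrable over the support. -/
theorem exGPD_all_moments_finite (σ ξ : ℝ) (hσ : 0 < σ) (n : ℕ) :
    MeasureTheory.IntegrableOn (fun y => |y| ^ n * exGPDpdf σ ξ y) (exGPDsupp σ ξ) := by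
  rcases lt_or_ge ξ 0 with hξ | hξ
  · rw [exGPDsupp, if_pos hξ]
    exact integrableOn_abs_pow_mul_exGPDpdf_of_neg hσ hξ n
  · rw [exGPDsupp, if_neg hξ.not_gt]
    exact (integrable_abs_pow_mul_exGPDpdf_of_nonneg hσ hξ n).integrableOn
end

section
/- Let σ > 0, ξ ≠ 0, and let k be a non-negative integer. If Y has the exGPD(σ, ξ) distribution with density f(y) = (e^y/σ)(1 + ξ e^y/σ)^(−1/ξ − 1) on its support, then E[(log(1 + (ξ/σ) e^Y))^k] = ∫ (log(1 + ξ e^y/σ))^k f(y) dy = ξ^k · k!, the integral taken over the support. -/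
/-!
Substitute `u = log (1 + ξ eʸ / σ) / ξ`. This maps the support of the density bijectively onto
`(0, ∞)` (up to the endpoint `log (-σ / ξ)` when `ξ < 0`), transforms `f(y) dy` into `e^{-u} du`,
and turns `log (1 + ξ eʸ / σ)` into `ξ u`. The integral becomes
`ξ^k ∫₀^∞ u^k e^{-u} du = ξ^k Γ(k + 1) = ξ^k k!`.
-/

open MeasureTheory Real Set
open scoped Nat

/-- If `U` has the standard exponential distribution, then `exGPDOfExp σ ξ U ~ exGPD(σ, ξ)`:
this is the inverse of `y ↦ log (1 + ξ eʸ / σ) / ξ`. -/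
noncomputable def exGPDOfExp (σ ξ u : ℝ) : ℝ := log (σ * (exp (ξ * u) - 1) / ξ)

noncomputable def exGPDDensity (σ ξ y : ℝ) : ℝ :=
  (exp y / σ) * (1 + ξ * exp y / σ) ^ (-1 / ξ - 1)

theorem exp_mul_sub_one_div_pos_iff {ξ : ℝ} (hξ : ξ ≠ 0) (u : ℝ) :
    0 < (exp (ξ * u) - 1) / ξ ↔ 0 < u := by
  rcases hξ.lt_or_gt with hneg | hpos
  · rw [← neg_div_neg_eq, div_pos_iff_of_pos_right (neg_pos.2 hneg), neg_pos, sub_neg,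
      exp_lt_one_iff, mul_neg_iff]
    constructor
    · rintro (⟨h, _⟩ | ⟨_, h⟩) <;> linarith
    · intro hu; exact Or.inr ⟨hneg, hu⟩
  · rw [div_pos_iff_of_pos_right hpos, sub_pos, one_lt_exp_iff, mul_pos_iff_of_pos_left hpos]

theorem setOf_one_add_mul_exp_div_pos {σ ξ : ℝ} (hσ : 0 < σ) :
    {y | 0 < 1 + ξ * exp y / σ} = if ξ < 0 then Iio (log (-σ / ξ)) else univ := by
  split_ifs with hneg
  · ext y
    have h1 : 1 + ξ * exp y / σ = (σ + ξ * exp y) / σ := by field_simp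
    rw [mem_ofPred_eq, mem_Iio, ← exp_lt_exp (x := y),
      exp_log (div_pos_of_neg_of_neg (by linarith) hneg), lt_div_iff_of_neg hneg, h1,
      div_pos_iff_of_pos_right hσ]
    constructor <;> intro <;> linarith
  · ext y
    simp only [mem_ofPred_eq, mem_univ, iff_true]
    have hexp := exp_pos y
    have hξ : 0 ≤ ξ := not_lt.1 hneg
    positivity

section

variable {σ ξ : ℝ} (hσ : 0 < σ) (hξ : ξ ≠ 0)
include hσ hξ

theorem exp_exGPDOfExp {u : ℝ} (hu : 0 < u) :
    exp (exGPDOfExp σ ξ u) = σ * (exp (ξ * u) - 1) / ξ := by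
  have hpos := (exp_mul_sub_one_div_pos_iff hξ u).2 hu
  exact exp_log (by rw [mul_div_assoc]; positivity)

theorem one_add_mul_exp_exGPDOfExp {u : ℝ} (hu : 0 < u) :
    1 + ξ * exp (exGPDOfExp σ ξ u) / σ = exp (ξ * u) := by
  rw [exp_exGPDOfExp hσ hξ hu]
  field_simp
  ring

theorem exGPDOfExp_log_one_add {y : ℝ} (hy : 0 < 1 + ξ * exp y / σ) :
    exGPDOfExp σ ξ (log (1 + ξ * exp y / σ) / ξ) = y := by
  have hσξ : σ * (1 + ξ * exp y / σ - 1) / ξ = exp y := by field_simp; ring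
  rw [exGPDOfExp, mul_div_cancel₀ _ hξ, exp_log hy, hσξ, log_exp]

theorem exGPDOfExp_image_Ioi :
    exGPDOfExp σ ξ '' Ioi 0 = {y | 0 < 1 + ξ * exp y / σ} := by
  ext y
  constructor
  · rintro ⟨u, hu, rfl⟩
    rw [mem_ofPred_eq, one_add_mul_exp_exGPDOfExp hσ hξ hu]
    exact exp_pos _
  · intro hy
    refine ⟨log (1 + ξ * exp y / σ) / ξ, ?_, exGPDOfExp_log_one_add hσ hξ hy⟩
    rw [mem_Ioi, ← exp_mul_sub_one_div_pos_iff hξ, mul_div_cancel₀ _ hξ, exp_log hy,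
      add_sub_cancel_left, mul_div_assoc, mul_div_cancel_left₀ _ hξ]
    positivity

theorem injOn_exGPDOfExp : InjOn (exGPDOfExp σ ξ) (Ioi 0) := by
  intro u hu v hv huv
  have h := one_add_mul_exp_exGPDOfExp hσ hξ hu
  rw [huv, one_add_mul_exp_exGPDOfExp hσ hξ hv] at h
  exact mul_left_cancel₀ hξ (exp_injective h).symm

theorem hasDerivAt_exGPDOfExp {u : ℝ} (hu : 0 < u) :
    HasDerivAt (exGPDOfExp σ ξ) (exp (ξ * u) / ((exp (ξ * u) - 1) / ξ)) u := by
  have hpos := (exp_mul_sub_one_div_pos_iff hξ u).2 hu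
  have hlin : HasDerivAt (fun u => σ * (exp (ξ * u) - 1) / ξ) (σ * (exp (ξ * u) * ξ) / ξ) u :=
    ((((hasDerivAt_id u).const_mul ξ).exp.sub_const 1).const_mul σ).div_const ξ |>.congr_deriv
      (by simp)
  convert hlin.log (by rw [mul_div_assoc]; positivity) using 1
  · ext; rfl
  · field_simp

theorem abs_deriv_mul_exGPDDensity_exGPDOfExp {u : ℝ} (hu : 0 < u) :
    |exp (ξ * u) / ((exp (ξ * u) - 1) / ξ)| * exGPDDensity σ ξ (exGPDOfExp σ ξ u) = exp (-u) := by
  have hpos := (exp_mul_sub_one_div_pos_iff hξ u).2 hu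
  have hne : exp (ξ * u) - 1 ≠ 0 := fun h => by simp [h] at hpos
  have hpow : exp (ξ * u) ^ (-1 / ξ - 1) = exp (-u) / exp (ξ * u) := by
    rw [← exp_mul, ← exp_sub]
    congr 1
    field_simp
  rw [exGPDDensity, one_add_mul_exp_exGPDOfExp hσ hξ hu, exp_exGPDOfExp hσ hξ hu, hpow,
    abs_of_pos (by positivity)]
  field_simp

end

theorem integral_pow_mul_exp_neg_Ioi_zero (k : ℕ) :
    ∫ x in Ioi (0 : ℝ), x ^ k * exp (-x) = k ! := by
  rw [← Gamma_nat_eq_factorial, Gamma_eq_integral (by positivity)]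
  refine setIntegral_congr_fun measurableSet_Ioi fun x _ => ?_
  simp [mul_comm]

/-- For `σ > 0`, `ξ ≠ 0` and a non-negative integer `k`, if `Y ~ exGPD(σ, ξ)` then
`E[(log(1 + (ξ/σ)e^Y))^k] = ξ^k · k!`. -/
theorem exGPD_property_b (σ ξ : ℝ) (hσ : 0 < σ) (hξ : ξ ≠ 0) (k : ℕ) :
    ∫ y in (if ξ < 0 then Set.Iic (Real.log (-σ / ξ)) else Set.univ),
        (Real.log (1 + ξ * Real.exp y / σ)) ^ k *
          ((Real.exp y / σ) * (1 + ξ * Real.exp y / σ) ^ (-1 / ξ - 1)) =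
      ξ ^ k * (Nat.factorial k : ℝ) := by
  have hsupport : (if ξ < 0 then Iic (log (-σ / ξ)) else univ : Set ℝ) =ᵐ[volume]
      exGPDOfExp σ ξ '' Ioi 0 := by
    rw [exGPDOfExp_image_Ioi hσ hξ, setOf_one_add_mul_exp_div_pos hσ]
    split_ifs
    · exact Iio_ae_eq_Iic.symm
    · rfl
  have hderiv : ∀ u ∈ Ioi (0 : ℝ), HasDerivWithinAt (exGPDOfExp σ ξ)
      (exp (ξ * u) / ((exp (ξ * u) - 1) / ξ)) (Ioi 0) u :=
    fun u hu => (hasDerivAt_exGPDOfExp hσ hξ hu).hasDerivWithinAt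
  calc _ = ∫ y in exGPDOfExp σ ξ '' Ioi 0, log (1 + ξ * exp y / σ) ^ k * exGPDDensity σ ξ y :=
        setIntegral_congr_set hsupport
    _ = ∫ u in Ioi 0, |exp (ξ * u) / ((exp (ξ * u) - 1) / ξ)| •
          (log (1 + ξ * exp (exGPDOfExp σ ξ u) / σ) ^ k * exGPDDensity σ ξ (exGPDOfExp σ ξ u)) :=
        integral_image_eq_integral_abs_deriv_smul measurableSet_Ioi hderiv
          (injOn_exGPDOfExp hσ hξ) _
    _ = ∫ u in Ioi 0, ξ ^ k * (u ^ k * exp (-u)) := by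
        refine setIntegral_congr_fun measurableSet_Ioi fun u hu => ?_
        rw [smul_eq_mul, mul_left_comm, abs_deriv_mul_exGPDDensity_exGPDOfExp hσ hξ hu,
          one_add_mul_exp_exGPDOfExp hσ hξ hu, log_exp, mul_pow, mul_assoc]
    _ = ξ ^ k * k ! := by rw [integral_const_mul, integral_pow_mul_exp_neg_Ioi_zero]
end

section
/- Let σ > 0, ξ < 0, and let c be a real number with c < log(−σ/ξ). Then the integrated survival function of exGPD(σ, ξ) equals an incomplete Beta integral: ∫_c^{log(−σ/ξ)} (1 + ξ e^y/σ)^(−1/ξ) dy = ∫_0^{1 + ξ e^c/σ} t^(−1/ξ) (1 − t)^(−1) dt. -/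
open Real intervalIntegral

/-- The substitution `t = 1 + κ eʸ`, under which `dt = -(1 - t) dy`. Since it is monotone, no
continuity or integrability of `t ^ a` is needed, so `a` is arbitrary. -/
theorem integral_one_add_mul_exp_rpow {κ : ℝ} (hκ : κ < 0) (a c d : ℝ) :
    ∫ y in c..d, (1 + κ * exp y) ^ a =
      ∫ t in (1 + κ * exp d)..(1 + κ * exp c), t ^ a * (1 - t)⁻¹ := by
  have hderiv : ∀ y, HasDerivAt (fun y ↦ 1 + κ * exp y) (κ * exp y) y := fun y ↦
    ((hasDerivAt_exp y).const_mul κ).const_add 1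
  have hsubst := integral_comp_mul_deriv_of_deriv_nonpos
    (f := fun y ↦ 1 + κ * exp y) (g := fun t ↦ t ^ a * (1 - t)⁻¹) (a := c) (b := d)
    (by fun_prop) (fun y _ ↦ hderiv y) (fun y _ ↦ (mul_neg_of_neg_of_pos hκ (exp_pos y)).le)
  have hintegrand : ∀ y,
      ((fun t ↦ t ^ a * (1 - t)⁻¹) ∘ fun y ↦ 1 + κ * exp y) y * (κ * exp y) =
        -(1 + κ * exp y) ^ a := fun y ↦ by
    have : κ * exp y ≠ 0 := (mul_neg_of_neg_of_pos hκ (exp_pos y)).ne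
    simp only [Function.comp, sub_add_cancel_left, inv_neg, neg_mul, mul_neg, mul_assoc,
      inv_mul_cancel₀ this, mul_one]
  simp only [hintegrand, integral_neg] at hsubst
  rw [integral_symm (1 + κ * exp c), ← hsubst, neg_neg]

theorem exGPD_integrated_survival_neg_general (σ ξ : ℝ) (hσ : 0 < σ) (hξ : ξ < 0) (c : ℝ) :
    ∫ y in c..(Real.log (-σ / ξ)), (1 + ξ * Real.exp y / σ) ^ (-1 / ξ) =
      ∫ t in (0 : ℝ)..(1 + ξ * Real.exp c / σ), t ^ (-1 / ξ) * (1 - t)⁻¹ := by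
  have hκ : ξ / σ < 0 := div_neg_of_neg_of_pos hξ hσ
  have hendpoint : 1 + ξ / σ * exp (log (-σ / ξ)) = 0 := by
    rw [exp_log (div_pos_of_neg_of_neg (neg_neg_of_pos hσ) hξ)]
    field_simp [hξ.ne]
    ring
  simp only [mul_div_right_comm ξ]
  rw [integral_one_add_mul_exp_rpow hκ, hendpoint]

/-- For `σ > 0`, `ξ < 0` and real `c < log(−σ/ξ)`, the integrated survival function
of exGPD(σ, ξ) equals the incomplete Beta integral
`∫_0^{1+ξe^c/σ} t^(−1/ξ)(1−t)^(−1) dt`. -/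
theorem exGPD_integrated_survival_neg (σ ξ : ℝ) (hσ : 0 < σ) (hξ : ξ < 0) (c : ℝ)
    (hc : c < Real.log (-σ / ξ)) :
    ∫ y in c..(Real.log (-σ / ξ)), (1 + ξ * Real.exp y / σ) ^ (-1 / ξ) =
      ∫ t in (0 : ℝ)..(1 + ξ * Real.exp c / σ), t ^ (-1 / ξ) * (1 - t)⁻¹ :=
  exGPD_integrated_survival_neg_general σ ξ hσ hξ c
end
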